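/- For every t ∈ ℝ, the t-logistic distribution function G_t satisfies Assumption (GEV) with index q = max(t,0): there exist sequences c_m ∈ ℝ and d_m > 0 such that m·G_t(c_m + d_m z) → exp_{max(t,0)}(z) as m → ∞ for every z ∈ ℝ at which exp_{max(t,0)}(z) is finite. -/

import Mathlib

open ENNReal Filter Topology

/-- The `t`-exponential function, with values in `[0,∞]`
(`[0]₊^r = ∞` for negative exponents `r`, as built into `ENNReal.rpow`). -/
noncomputable def qexpE (t z : ℝ) : ℝ≥0∞ :=
  if t = 1 then ENNReal.ofReal (Real.exp z)
  else (ENNReal.ofReal (1 + (1 - t) * z)) ^ (1 / (1 - t))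

/-- The `q`-exponential function, real-valued version (agreeing with `qexpE`
wherever the latter is finite). -/
noncomputable def qexp (q z : ℝ) : ℝ :=
  if q = 1 then Real.exp z else (max (1 + (1 - q) * z) 0) ^ (1 / (1 - q))

/-!
Write `α = 1 - t` and `u = G_t(w)`. For `t ≠ 1` the equation defining `γ_t` says precisely that
`u ^ α - (1 - u) ^ α = α w` whenever `0 < u < 1`, while for `t < 1` one has `u = 0` as soon as
`1 + α w ≤ 0`. The normalisations are chosen so that `1 + α (c + d z) = s · (1 + (1 - q) z)`
with `s → 0`; this forces `u → 0`, and the expansion `(1 - u) ^ α = 1 - α u + o(u)` decides which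
term dominates. For `0 < t ≠ 1` the correction `(1 - u) ^ α - 1` is negligible against `u ^ α`, so
`(m u) ^ α → 1 + α z`. For `t < 0` it is `u ^ α` that is negligible against `α u`, so
`m u → 1 + z`. At `t = 0` both terms are linear and `u = (1 + w) / 2` exactly, and at `t = 1`,
`G_1` is the logistic function and `c_m = -log m`.
-/

open Real Asymptotics

lemma qexpE_of_ne_one {t : ℝ} (ht : t ≠ 1) (x : ℝ) :
    qexpE t x = ENNReal.ofReal (1 + (1 - t) * x) ^ (1 / (1 - t)) :=
  if_neg ht

lemma qexp_of_ne_one {q : ℝ} (hq : q ≠ 1) (z : ℝ) :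
    qexp q z = max (1 + (1 - q) * z) 0 ^ (1 / (1 - q)) :=
  if_neg hq

lemma qexp_eq_zero {q z : ℝ} (hq : q < 1) (hz : 1 + (1 - q) * z ≤ 0) : qexp q z = 0 := by
  rw [qexp_of_ne_one hq.ne, max_eq_right hz, zero_rpow (by simp; linarith)]

lemma qexp_zero (z : ℝ) : qexp 0 z = max (1 + z) 0 := by
  simp [qexp_of_ne_one zero_ne_one]

lemma max_zero_eq_self_of_pos {b : ℝ} (h : 0 < max b 0) : max b 0 = b :=
  max_eq_left ((lt_max_iff.1 h).resolve_right (lt_irrefl 0)).le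

-- No finiteness hypothesis is needed: where `qexpE t x = ⊤` both sides are `0`.
lemma toReal_qexpE_rpow {t : ℝ} (ht : t ≠ 1) (x : ℝ) :
    (qexpE t x).toReal ^ (1 - t) = max (1 + (1 - t) * x) 0 := by
  rw [qexpE_of_ne_one ht, ← ENNReal.toReal_rpow, ENNReal.toReal_ofReal', one_div,
    rpow_inv_rpow (le_max_right _ _) (sub_ne_zero.2 ht.symm)]

lemma qexpE_ne_zero {t : ℝ} (ht : 1 < t) (x : ℝ) : qexpE t x ≠ 0 := by
  rw [qexpE_of_ne_one ht.ne', Ne, ENNReal.rpow_eq_zero_iff]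
  rintro (⟨-, h⟩ | ⟨h, -⟩)
  · rw [one_div_pos] at h; linarith
  · exact ENNReal.ofReal_ne_top h

/-- `G_t(w) = exp_t(w - γ_t(w))`, as a real number. -/
noncomputable def tLogisticCDF (t : ℝ) (γ : ℝ → ℝ) (w : ℝ) : ℝ :=
  (qexpE t (w - γ w)).toReal

def IsTLogisticNormalizer (t : ℝ) (γ : ℝ → ℝ) : Prop :=
  ∀ z, qexpE t (z - γ z) + qexpE t (-γ z) = 1

section tLogistic

variable {t : ℝ} {γ : ℝ → ℝ}

lemma qexpE_sub_ne_top (hγ : IsTLogisticNormalizer t γ) (w : ℝ) : qexpE t (w - γ w) ≠ ⊤ :=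
  ne_top_of_le_ne_top ENNReal.one_ne_top ((hγ w).symm ▸ le_self_add)

lemma qexpE_neg_ne_top (hγ : IsTLogisticNormalizer t γ) (w : ℝ) : qexpE t (-γ w) ≠ ⊤ :=
  ne_top_of_le_ne_top ENNReal.one_ne_top ((hγ w).symm ▸ le_add_self)

lemma one_sub_tLogisticCDF (hγ : IsTLogisticNormalizer t γ) (w : ℝ) :
    1 - tLogisticCDF t γ w = (qexpE t (-γ w)).toReal := by
  have h := congrArg ENNReal.toReal (hγ w)
  rw [ENNReal.toReal_add (qexpE_sub_ne_top hγ w) (qexpE_neg_ne_top hγ w),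
    ENNReal.toReal_one] at h
  rw [tLogisticCDF, ← h]
  ring

lemma tLogisticCDF_nonneg (w : ℝ) : 0 ≤ tLogisticCDF t γ w := ENNReal.toReal_nonneg

lemma tLogisticCDF_le_one (hγ : IsTLogisticNormalizer t γ) (w : ℝ) :
    tLogisticCDF t γ w ≤ 1 := by
  linarith [one_sub_tLogisticCDF hγ w, (qexpE t (-γ w)).toReal_nonneg]

lemma tLogisticCDF_one (hγ : IsTLogisticNormalizer 1 γ) (w : ℝ) :
    tLogisticCDF 1 γ w = exp w / (1 + exp w) := by
  have h := one_sub_tLogisticCDF hγ w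
  simp only [tLogisticCDF, qexpE, if_true, ENNReal.toReal_ofReal (exp_nonneg _)] at h ⊢
  rw [sub_eq_add_neg w, exp_add] at h ⊢
  rw [_root_.eq_div_iff (by positivity)]
  linear_combination (-exp w) * h

lemma tLogisticCDF_rpow_sub_rpow (hγ : IsTLogisticNormalizer t γ) (ht : t ≠ 1) {w : ℝ}
    (h0 : 0 < tLogisticCDF t γ w) (h1 : tLogisticCDF t γ w < 1) :
    tLogisticCDF t γ w ^ (1 - t) - (1 - tLogisticCDF t γ w) ^ (1 - t) = (1 - t) * w := by
  have hu := toReal_qexpE_rpow ht (w - γ w)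
  have hv := toReal_qexpE_rpow ht (-γ w)
  rw [← tLogisticCDF] at hu
  rw [← one_sub_tLogisticCDF hγ] at hv
  rw [hu, hv, max_zero_eq_self_of_pos (hu ▸ rpow_pos_of_pos h0 _),
    max_zero_eq_self_of_pos (hv ▸ rpow_pos_of_pos (sub_pos.2 h1) _)]
  ring

lemma tLogisticCDF_rpow_le (hγ : IsTLogisticNormalizer t γ) (ht : t < 1) (w : ℝ) :
    tLogisticCDF t γ w ^ (1 - t) ≤ max (1 + (1 - t) * w) 0 := by
  have hα : 0 < 1 - t := by linarith
  have hv := toReal_qexpE_rpow ht.ne (-γ w)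
  rw [← one_sub_tLogisticCDF hγ] at hv
  have hγ0 : 0 ≤ γ w := by
    have h : (1 - tLogisticCDF t γ w) ^ (1 - t) ≤ 1 :=
      rpow_le_one (by linarith [tLogisticCDF_le_one hγ w])
        (by linarith [tLogisticCDF_nonneg (t := t) (γ := γ) w]) hα.le
    rw [hv] at h
    nlinarith [le_max_left (1 + (1 - t) * -γ w) 0]
  rw [tLogisticCDF, toReal_qexpE_rpow ht.ne]
  gcongr
  linarith

lemma tLogisticCDF_eq_zero (hγ : IsTLogisticNormalizer t γ) (ht : t < 1) {w : ℝ}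
    (hw : 1 + (1 - t) * w ≤ 0) : tLogisticCDF t γ w = 0 := by
  have h := tLogisticCDF_rpow_le hγ ht w
  rw [max_eq_right hw] at h
  by_contra hne
  linarith [rpow_pos_of_pos ((tLogisticCDF_nonneg w).lt_of_ne' hne) (1 - t)]

lemma tLogisticCDF_mem_Ioo_of_lt_one (hγ : IsTLogisticNormalizer t γ) (ht : t < 1) {w : ℝ}
    (hw0 : 0 < 1 + (1 - t) * w) (hw1 : 1 + (1 - t) * w < 1) :
    0 < tLogisticCDF t γ w ∧ tLogisticCDF t γ w < 1 := by
  have hα : 0 < 1 - t := by linarith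
  have hle := tLogisticCDF_rpow_le hγ ht w
  rw [max_eq_left hw0.le] at hle
  constructor
  · by_contra h0
    have hG : tLogisticCDF t γ w = 0 := le_antisymm (not_lt.1 h0) (tLogisticCDF_nonneg w)
    -- `G w = 0` forces `γ w = 0`, and then `G w ^ (1 - t) = 1 + (1 - t) * w > 0`
    have hv := toReal_qexpE_rpow ht.ne (-γ w)
    rw [← one_sub_tLogisticCDF hγ, hG, sub_zero, Real.one_rpow] at hv
    rw [max_zero_eq_self_of_pos (hv ▸ one_pos)] at hv
    have hu := toReal_qexpE_rpow ht.ne (w - γ w)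
    rw [← tLogisticCDF, hG, zero_rpow hα.ne'] at hu
    nlinarith [le_max_left (1 + (1 - t) * (w - γ w)) 0]
  · by_contra h1
    linarith [one_le_rpow (not_lt.1 h1) hα.le]

lemma tLogisticCDF_mem_Ioo_of_one_lt (hγ : IsTLogisticNormalizer t γ) (ht : 1 < t) (w : ℝ) :
    0 < tLogisticCDF t γ w ∧ tLogisticCDF t γ w < 1 := by
  have hv := ENNReal.toReal_pos (qexpE_ne_zero ht _) (qexpE_neg_ne_top hγ w)
  rw [← one_sub_tLogisticCDF hγ] at hv
  exact ⟨ENNReal.toReal_pos (qexpE_ne_zero ht _) (qexpE_sub_ne_top hγ w), by linarith⟩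

end tLogistic

lemma hasDerivAt_one_sub_rpow (α : ℝ) : HasDerivAt (fun s : ℝ => (1 - s) ^ α) (-α) 0 := by
  simpa using ((hasDerivAt_id (0 : ℝ)).const_sub 1).rpow_const (p := α) (by simp)

section Asymptotics

variable {u : ℝ → ℝ} {C : ℝ}

lemma tendsto_zero_of_mul_le (h : ∀ᶠ x in atTop, 0 ≤ u x ∧ x * u x ≤ C) :
    Tendsto u atTop (𝓝 0) := by
  refine tendsto_of_tendsto_of_tendsto_of_le_of_le' tendsto_const_nhds
    ((tendsto_const_nhds (x := C)).div_atTop tendsto_id) (h.mono fun x hx => hx.1) ?_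
  filter_upwards [h, eventually_gt_atTop 0] with x hx hx0
  rw [id, le_div_iff₀ hx0, mul_comm]
  exact hx.2

lemma isBigO_one_of_mul_le (h : ∀ᶠ x in atTop, 0 ≤ u x ∧ x * u x ≤ C) :
    (fun x => x * u x) =O[atTop] (fun _ => (1 : ℝ)) := by
  refine IsBigO.of_bound C ?_
  filter_upwards [h, eventually_ge_atTop 0] with x hx hx0
  rw [norm_one, mul_one, Real.norm_of_nonneg (mul_nonneg hx0 hx.1)]
  exact hx.2

lemma mul_rpow_eq_of_rpow_sub_rpow {α X x v : ℝ} (hx : 0 < x) (hv : 0 ≤ v)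
    (h : v ^ α - (1 - v) ^ α = x ^ (-α) * X - 1) :
    (x * v) ^ α = X + x ^ α * ((1 - v) ^ α - 1) := by
  have hxα : x ^ α ≠ 0 := (rpow_pos_of_pos hx α).ne'
  rw [mul_rpow hx.le hv, show v ^ α = x ^ (-α) * X - 1 + (1 - v) ^ α by linarith,
    rpow_neg hx.le]
  field_simp
  ring

lemma mul_le_rpow_inv_of_rpow_sub_rpow {α X x v : ℝ} (hα : α ≠ 0) (hX : 0 < X) (hx : 0 < x)
    (hv0 : 0 < v) (hv1 : v < 1) (h : v ^ α - (1 - v) ^ α = x ^ (-α) * X - 1) :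
    x * v ≤ X ^ α⁻¹ := by
  have hxv := mul_rpow_eq_of_rpow_sub_rpow hx hv0.le h
  have hxα := rpow_pos_of_pos hx α
  rcases hα.lt_or_gt with hα | hα
  · have : 1 ≤ (1 - v) ^ α :=
      one_le_rpow_of_pos_of_le_one_of_nonpos (by linarith) (by linarith) hα.le
    exact (le_rpow_inv_iff_of_neg (by positivity) hX hα).2 (by nlinarith)
  · have : (1 - v) ^ α ≤ 1 := rpow_le_one (by linarith) (by linarith) hα.le
    exact (le_rpow_inv_iff_of_pos (by positivity) hX.le hα).2 (by nlinarith)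

theorem tendsto_mul_of_rpow_sub_rpow {α X : ℝ} (hα0 : α ≠ 0) (hα1 : α < 1) (hX : 0 < X)
    (hu : ∀ᶠ x in atTop,
      0 < u x ∧ u x < 1 ∧ u x ^ α - (1 - u x) ^ α = x ^ (-α) * X - 1) :
    Tendsto (fun x => x * u x) atTop (𝓝 (X ^ α⁻¹)) := by
  have hbdd : ∀ᶠ x in atTop, 0 ≤ u x ∧ x * u x ≤ X ^ α⁻¹ := by
    filter_upwards [hu, eventually_gt_atTop 0] with x ⟨h0, h1, h⟩ hx
    exact ⟨h0.le, mul_le_rpow_inv_of_rpow_sub_rpow hα0 hX hx h0 h1 h⟩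
  have hO : (fun x => (1 - u x) ^ α - 1) =O[atTop] u := by
    simpa [Function.comp_def] using
      (hasDerivAt_one_sub_rpow α).isBigO_sub.comp_tendsto (tendsto_zero_of_mul_le hbdd)
  have hxu : (fun x => x ^ α * u x) =O[atTop] (fun x => x ^ (α - 1)) := by
    refine ((isBigO_refl (fun x : ℝ => x ^ (α - 1)) atTop).mul
      (isBigO_one_of_mul_le hbdd)).congr' ?_ (Eventually.of_forall fun x => mul_one _)
    filter_upwards [eventually_gt_atTop 0] with x hx
    rw [rpow_sub_one hx.ne']
    field_simp
  have hrem : Tendsto (fun x => x ^ α * ((1 - u x) ^ α - 1)) atTop (𝓝 0) := by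
    refine (((isBigO_refl (fun x : ℝ => x ^ α) atTop).mul hO).trans hxu).trans_tendsto ?_
    simpa using tendsto_rpow_neg_atTop (y := 1 - α) (by linarith)
  have hpow : Tendsto (fun x => (x * u x) ^ α) atTop (𝓝 X) := by
    refine (add_zero X ▸ hrem.const_add X).congr' ?_
    filter_upwards [hu, eventually_gt_atTop 0] with x ⟨h0, _, h⟩ hx
    exact (mul_rpow_eq_of_rpow_sub_rpow hx h0.le h).symm
  refine (hpow.rpow_const (p := α⁻¹) (Or.inl hX.ne')).congr' ?_
  filter_upwards [hbdd, eventually_gt_atTop 0] with x hx hx0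
  exact rpow_rpow_inv (mul_nonneg hx0.le hx.1) hα0

theorem tendsto_mul_of_rpow_sub_rpow_of_one_lt {α Z : ℝ} (hα : 1 < α)
    (hu : ∀ᶠ x in atTop, 0 < u x ∧ u x < 1 ∧ u x ^ α - (1 - u x) ^ α = α * Z / x - 1) :
    Tendsto (fun x => x * u x) atTop (𝓝 Z) := by
  have hbdd : ∀ᶠ x in atTop, 0 ≤ u x ∧ x * u x ≤ α * Z := by
    filter_upwards [hu, eventually_gt_atTop 0] with x ⟨h0, h1, h⟩ hx
    have hle : (1 - u x) ^ α ≤ 1 - u x := by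
      simpa using rpow_le_rpow_of_exponent_ge (by linarith) (by linarith) hα.le
    have h' : u x ≤ α * Z / x := by linarith [rpow_nonneg h0.le α]
    exact ⟨h0.le, by rwa [le_div_iff₀ hx, mul_comm] at h'⟩
  have hu0 := tendsto_zero_of_mul_le hbdd
  have hbddO := isBigO_one_of_mul_le hbdd
  have hpow : Tendsto (fun x => x * u x ^ α) atTop (𝓝 0) := by
    have hv : Tendsto (fun x => u x ^ (α - 1)) atTop (𝓝 0) := by
      simpa [zero_rpow (sub_pos.2 hα).ne'] using hu0.rpow_const (Or.inr (sub_pos.2 hα).le)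
    refine ((hbddO.mul (isBigO_refl _ _)).congr' ?_
      (Eventually.of_forall fun x => one_mul _)).trans_tendsto hv
    filter_upwards [hu] with x ⟨h0, _⟩
    rw [rpow_sub_one h0.ne']
    field_simp
  have hrem : Tendsto (fun x => x * ((1 - u x) ^ α - 1 + α * u x)) atTop (𝓝 0) := by
    have ho : (fun x => (1 - u x) ^ α - 1 + α * u x) =o[atTop] u := by
      simpa [Function.comp_def, sub_eq_add_neg, mul_comm] using
        (hasDerivAt_one_sub_rpow α).isLittleO.comp_tendsto hu0
    exact (isLittleO_one_iff ℝ).1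
      (((isBigO_refl (fun x : ℝ => x) atTop).mul_isLittleO ho).trans_isBigO hbddO)
  have hlim := ((hpow.neg.add hrem).const_add (α * Z)).div_const α
  rw [neg_zero, add_zero, add_zero, mul_div_cancel_left₀ _ (by linarith : α ≠ 0)] at hlim
  refine hlim.congr' ?_
  filter_upwards [hu, eventually_gt_atTop 0] with x ⟨_, _, h⟩ hx
  have h' : α * Z = x * (u x ^ α - (1 - u x) ^ α + 1) := by
    rw [h]
    field_simp
    ring
  field_simp
  rw [h']
  ring

end Asymptotics

section tLogisticLimits

variable {t : ℝ} {γ : ℝ → ℝ}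

lemma tendsto_mul_tLogisticCDF_of_nonpos (hγ : IsTLogisticNormalizer t γ) (ht : t < 1)
    {w : ℝ → ℝ} (hw : ∀ᶠ x in atTop, 1 + (1 - t) * w x ≤ 0) :
    Tendsto (fun x => x * tLogisticCDF t γ (w x)) atTop (𝓝 0) :=
  tendsto_const_nhds.congr' (hw.mono fun x hx => by simp [tLogisticCDF_eq_zero hγ ht hx])

lemma eventually_tLogisticCDF_rpow_sub_rpow (hγ : IsTLogisticNormalizer t γ) (ht : t < 1)
    {w : ℝ → ℝ} (hw0 : ∀ᶠ x in atTop, 0 < 1 + (1 - t) * w x)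
    (hw : Tendsto (fun x => 1 + (1 - t) * w x) atTop (𝓝 0)) :
    ∀ᶠ x in atTop, 0 < tLogisticCDF t γ (w x) ∧ tLogisticCDF t γ (w x) < 1 ∧
      tLogisticCDF t γ (w x) ^ (1 - t) - (1 - tLogisticCDF t γ (w x)) ^ (1 - t)
        = (1 - t) * w x := by
  filter_upwards [hw0, hw.eventually_lt_const one_pos] with x hx0 hx1
  obtain ⟨h0, h1⟩ := tLogisticCDF_mem_Ioo_of_lt_one hγ ht hx0 hx1
  exact ⟨h0, h1, tLogisticCDF_rpow_sub_rpow hγ ht.ne h0 h1⟩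

end tLogisticLimits

/-- Assumption (GEV) with index `q`. -/
def SatisfiesGEV (G : ℝ → ℝ) (q : ℝ) : Prop :=
  ∃ (c : ℕ → ℝ) (d : ℕ → ℝ), (∀ m, 0 < d m) ∧
    ∀ z : ℝ, (q ≤ 1 ∨ 0 < 1 + (1 - q) * z) →
      Tendsto (fun m : ℕ => (m : ℝ) * G (c m + d m * z)) atTop (𝓝 (qexp q z))

lemma satisfiesGEV_of_tendsto {G : ℝ → ℝ} {q : ℝ} (c d : ℝ → ℝ)
    (hd : ∀ x, 0 < x → 0 < d x)
    (h : ∀ z : ℝ, (q ≤ 1 ∨ 0 < 1 + (1 - q) * z) →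
      Tendsto (fun x => x * G (c x + d x * z)) atTop (𝓝 (qexp q z))) :
    SatisfiesGEV G q := by
  refine ⟨fun m => c m, fun m => if m = 0 then 1 else d m, fun m => ?_, fun z hz => ?_⟩
  · dsimp only
    split_ifs with hm
    · exact one_pos
    · exact hd m (Nat.cast_pos.2 (Nat.pos_of_ne_zero hm))
  · refine ((h z hz).comp tendsto_natCast_atTop_atTop).congr' ?_
    filter_upwards [eventually_ne_atTop 0] with m hm
    simp [hm]

section tLogisticGEV

variable {t : ℝ} {γ : ℝ → ℝ}

theorem satisfiesGEV_tLogisticCDF_one (hγ : IsTLogisticNormalizer 1 γ) :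
    SatisfiesGEV (tLogisticCDF 1 γ) 1 := by
  refine satisfiesGEV_of_tendsto (fun x => -log x) (fun _ => 1) (fun _ _ => one_pos)
    fun z _ => ?_
  rw [qexp, if_pos rfl]
  have hden := (tendsto_inv_atTop_zero.const_mul (exp z)).const_add 1
  rw [mul_zero, add_zero] at hden
  refine (div_one (exp z) ▸ tendsto_const_nhds.div hden one_ne_zero).congr' ?_
  filter_upwards [eventually_gt_atTop 0] with x hx
  rw [Pi.div_apply, tLogisticCDF_one hγ, one_mul, exp_add, exp_neg, exp_log hx]
  field_simp

theorem satisfiesGEV_tLogisticCDF_of_pos (hγ : IsTLogisticNormalizer t γ) (ht0 : 0 < t)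
    (ht1 : t ≠ 1) : SatisfiesGEV (tLogisticCDF t γ) t := by
  have hα : 1 - t ≠ 0 := sub_ne_zero.2 ht1.symm
  -- `c x = ln_t (1 / x)`, the `t`-logarithm
  set c : ℝ → ℝ := fun x => (x ^ (-(1 - t)) - 1) / (1 - t)
  set d : ℝ → ℝ := fun x => x ^ (-(1 - t))
  refine satisfiesGEV_of_tendsto c d (fun x hx => rpow_pos_of_pos hx _) fun z hz => ?_
  have hw : ∀ x, 1 + (1 - t) * (c x + d x * z) = d x * (1 + (1 - t) * z) := fun x => by
    simp only [c, d]
    field_simp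
    ring
  rcases le_or_gt (1 + (1 - t) * z) 0 with hX | hX
  · have ht : t < 1 := (hz.resolve_right hX.not_gt).lt_of_ne ht1
    rw [qexp_eq_zero ht hX]
    refine tendsto_mul_tLogisticCDF_of_nonpos hγ ht ?_
    filter_upwards [eventually_gt_atTop 0] with x hx
    rw [hw]
    exact mul_nonpos_of_nonneg_of_nonpos (rpow_nonneg hx.le _) hX
  rw [qexp_of_ne_one ht1, max_eq_left hX.le, one_div]
  have hrel : ∀ᶠ x in atTop, 0 < tLogisticCDF t γ (c x + d x * z) ∧
      tLogisticCDF t γ (c x + d x * z) < 1 ∧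
      tLogisticCDF t γ (c x + d x * z) ^ (1 - t)
        - (1 - tLogisticCDF t γ (c x + d x * z)) ^ (1 - t) = (1 - t) * (c x + d x * z) := by
    rcases ht1.lt_or_gt with ht | ht
    · refine eventually_tLogisticCDF_rpow_sub_rpow hγ ht ?_ ?_
      · filter_upwards [eventually_gt_atTop 0] with x hx
        rw [hw]
        exact mul_pos (rpow_pos_of_pos hx _) hX
      · simp_rw [hw]
        simpa [d] using (tendsto_rpow_neg_atTop (by linarith : 0 < 1 - t)).mul_const
          (1 + (1 - t) * z)
    · refine Eventually.of_forall fun x => ?_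
      obtain ⟨h0, h1⟩ := tLogisticCDF_mem_Ioo_of_one_lt hγ ht (c x + d x * z)
      exact ⟨h0, h1, tLogisticCDF_rpow_sub_rpow hγ ht1 h0 h1⟩
  refine tendsto_mul_of_rpow_sub_rpow hα (by linarith) hX ?_
  filter_upwards [hrel] with x ⟨h0, h1, h⟩
  exact ⟨h0, h1, by linarith [hw x]⟩

theorem satisfiesGEV_tLogisticCDF_of_neg (hγ : IsTLogisticNormalizer t γ) (ht : t < 0) :
    SatisfiesGEV (tLogisticCDF t γ) 0 := by
  have hα : 1 < 1 - t := by linarith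
  set c : ℝ → ℝ := fun x => -1 / (1 - t) + 1 / x
  set d : ℝ → ℝ := fun x => 1 / x
  refine satisfiesGEV_of_tendsto c d (fun x hx => one_div_pos.2 hx) fun z _ => ?_
  have hw : ∀ᶠ x in atTop, 1 + (1 - t) * (c x + d x * z) = (1 - t) * (1 + z) / x := by
    filter_upwards [eventually_gt_atTop 0] with x hx
    simp only [c, d]
    field_simp
    ring
  rw [qexp_zero]
  rcases le_or_gt (1 + z) 0 with hz | hz
  · rw [max_eq_right hz]
    refine tendsto_mul_tLogisticCDF_of_nonpos hγ (by linarith) ?_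
    filter_upwards [hw, eventually_gt_atTop 0] with x hwx hx
    rw [hwx]
    exact div_nonpos_of_nonpos_of_nonneg (mul_nonpos_of_nonneg_of_nonpos (by linarith) hz) hx.le
  rw [max_eq_left hz.le]
  have hrel := eventually_tLogisticCDF_rpow_sub_rpow hγ (by linarith)
    (by filter_upwards [hw, eventually_gt_atTop 0] with x hwx hx; rw [hwx]; positivity)
    ((tendsto_congr' hw).2 (tendsto_const_nhds.div_atTop tendsto_id))
  refine tendsto_mul_of_rpow_sub_rpow_of_one_lt hα ?_
  filter_upwards [hrel, hw] with x ⟨h0, h1, h⟩ hwx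
  exact ⟨h0, h1, by linarith⟩

theorem satisfiesGEV_tLogisticCDF_zero (hγ : IsTLogisticNormalizer 0 γ) :
    SatisfiesGEV (tLogisticCDF 0 γ) 0 := by
  set c : ℝ → ℝ := fun x => -1 + 2 / x
  set d : ℝ → ℝ := fun x => 2 / x
  refine satisfiesGEV_of_tendsto c d (fun x hx => by positivity) fun z _ => ?_
  have hw : ∀ᶠ x in atTop, 1 + (1 - 0) * (c x + d x * z) = 2 * (1 + z) / x := by
    filter_upwards [eventually_gt_atTop 0] with x hx
    simp only [c, d]
    field_simp
    ring
  rw [qexp_zero]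
  rcases le_or_gt (1 + z) 0 with hz | hz
  · rw [max_eq_right hz]
    refine tendsto_mul_tLogisticCDF_of_nonpos hγ zero_lt_one ?_
    filter_upwards [hw, eventually_gt_atTop 0] with x hwx hx
    rw [hwx]
    exact div_nonpos_of_nonpos_of_nonneg (by linarith) hx.le
  rw [max_eq_left hz.le]
  have hrel := eventually_tLogisticCDF_rpow_sub_rpow hγ zero_lt_one
    (by filter_upwards [hw, eventually_gt_atTop 0] with x hwx hx; rw [hwx]; positivity)
    ((tendsto_congr' hw).2 (tendsto_const_nhds.div_atTop tendsto_id))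
  -- for `t = 0` the defining relation is linear: `G - (1 - G) = w`
  refine tendsto_const_nhds.congr' ?_
  filter_upwards [hrel, hw, eventually_gt_atTop 0] with x ⟨_, _, h⟩ hwx hx
  simp only [sub_zero, Real.rpow_one, one_mul] at h hwx
  field_simp at hwx
  linear_combination (-1 / 2) * hwx - (x / 2) * h

end tLogisticGEV

/-- Theorem 2 of the paper: for every `t ∈ ℝ`, the `t`-logistic
distribution function `G_t(z) = exp_t(z - γ_t(z))` satisfies Assumption (GEV)
with index `q = max(t,0)`: there exist sequences `c_m ∈ ℝ` and `d_m > 0` such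
that `m · G_t(c_m + d_m z) → exp_{max(t,0)}(z)` as `m → ∞` for every `z` at
which `exp_{max(t,0)}(z)` is finite. -/
theorem t_logistic_satisfies_gev (t : ℝ) (γ : ℝ → ℝ)
    (hγ : ∀ z : ℝ, qexpE t (z - γ z) + qexpE t (-(γ z)) = 1) :
    ∃ (c : ℕ → ℝ) (d : ℕ → ℝ), (∀ m, 0 < d m) ∧
      ∀ z : ℝ, (max t 0 ≤ 1 ∨ 0 < 1 + (1 - max t 0) * z) →
        Tendsto
          (fun m : ℕ =>
            (m : ℝ) * (qexpE t (c m + d m * z - γ (c m + d m * z))).toReal)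
          atTop (𝓝 (qexp (max t 0) z)) := by
  show SatisfiesGEV (tLogisticCDF t γ) (max t 0)
  rcases lt_trichotomy t 0 with ht | rfl | ht
  · rw [max_eq_right ht.le]
    exact satisfiesGEV_tLogisticCDF_of_neg hγ ht
  · rw [max_self]
    exact satisfiesGEV_tLogisticCDF_zero hγ
  · rw [max_eq_left ht.le]
    rcases eq_or_ne t 1 with rfl | ht1
    · exact satisfiesGEV_tLogisticCDF_one hγ
    · exact satisfiesGEV_tLogisticCDF_of_pos hγ ht ht1
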